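/- Let (𝒜, 𝒞, ⪯) be a well-defined c-SAF with ⪯ reasonable. If A1,...,An ∈ 𝒜 are all acceptable with respect to some attack conflict-free set E ⊆ 𝒜, then ⋃_{i=1}^n Prem(Ai) is c-consistent. -/
import Mathlib

namespace ASPIC

/-- An inference rule over the language `L`: a list of antecedents and a consequent. -/
structure InfRule (L : Type) where
  ants : List L
  cons : L

/-- An ASPIC+ argumentation system: a contrariness function, disjoint sets of strict
and defeasible inference rules, and a naming function for (defeasible) rules;
every formula has at least one contradictory. -/
structure ArgSystem (L : Type) where
  contr : L → Set L
  Rs : Set (InfRule L)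
  Rd : Set (InfRule L)
  nm : InfRule L → L
  hdisj : Rs ∩ Rd = ∅
  hcontrad : ∀ φ : L, ∃ ψ : L, ψ ∈ contr φ ∧ φ ∈ contr ψ

/-- A knowledge base: disjoint axioms `Kn` and ordinary premises `Kp`. -/
structure KB (L : Type) where
  Kn : Set L
  Kp : Set L
  hdisj : Kn ∩ Kp = ∅

/-- Argument trees: a premise, or the application of an inference rule to a list of
sub-arguments.  (All such trees are finite.) -/
inductive Arg (L : Type) : Type where
  | prem : L → Arg L
  | app : List (Arg L) → InfRule L → Arg L

namespace Arg

variable {L : Type}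

/-- The conclusion of an argument. -/
def conc : Arg L → L
  | prem φ => φ
  | app _ r => r.cons

/-- The top rule of an argument (none for premises). -/
def topRule : Arg L → Option (InfRule L)
  | prem _ => none
  | app _ r => some r

mutual
  /-- The premises of an argument. -/
  def premises : Arg L → Set L
    | prem φ => {φ}
    | app l _ => premisesL l
  def premisesL : List (Arg L) → Set L
    | [] => ∅
    | a :: as => premises a ∪ premisesL as
end

mutual
  /-- The sub-arguments of an argument (including itself). -/
  def subs : Arg L → Set (Arg L)
    | prem φ => {Arg.prem φ}
    | app l r => subsL l ∪ {Arg.app l r}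
  def subsL : List (Arg L) → Set (Arg L)
    | [] => ∅
    | a :: as => subs a ∪ subsL as
end

mutual
  /-- The rules occurring in an argument. -/
  def rules : Arg L → Set (InfRule L)
    | prem _ => ∅
    | app l r => rulesL l ∪ {r}
  def rulesL : List (Arg L) → Set (InfRule L)
    | [] => ∅
    | a :: as => rules a ∪ rulesL as
end

mutual
  /-- The last defeasible rules of an argument (relative to the set `Rd` of
  defeasible rules). -/
  def lastDefRules (Rd : Set (InfRule L)) : Arg L → Set (InfRule L)
    | prem _ => ∅
    | app l r =>
        let rest := lastDefRulesL Rd l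
        {x | (r ∈ Rd ∧ x = r) ∨ (r ∉ Rd ∧ x ∈ rest)}
  def lastDefRulesL (Rd : Set (InfRule L)) : List (Arg L) → Set (InfRule L)
    | [] => ∅
    | a :: as => lastDefRules Rd a ∪ lastDefRulesL Rd as
end

end Arg

variable {L : Type}

/-- Well-formed arguments on the basis of an argumentation theory `(AS, K)`. -/
inductive IsArg (AS : ArgSystem L) (K : KB L) : Arg L → Prop where
  | prem {φ : L} : φ ∈ K.Kn ∪ K.Kp → IsArg AS K (.prem φ)
  | app {l : List (Arg L)} {r : InfRule L} :
      (∀ a ∈ l, IsArg AS K a) →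
      r ∈ AS.Rs ∪ AS.Rd →
      l.map Arg.conc = r.ants →
      IsArg AS K (.app l r)

/-- The defeasible rules of an argument. -/
def defRules (AS : ArgSystem L) (A : Arg L) : Set (InfRule L) := A.rules ∩ AS.Rd
/-- The strict rules of an argument. -/
def stRules (AS : ArgSystem L) (A : Arg L) : Set (InfRule L) := A.rules ∩ AS.Rs
/-- The ordinary premises of an argument. -/
def premP (K : KB L) (A : Arg L) : Set L := A.premises ∩ K.Kp
/-- The axiom premises of an argument. -/
def premN (K : KB L) (A : Arg L) : Set L := A.premises ∩ K.Kn
/-- An argument is strict if it uses no defeasible rules. -/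
def strictArg (AS : ArgSystem L) (A : Arg L) : Prop := defRules AS A = ∅
/-- An argument is firm if all its premises are axioms. -/
def firmArg (K : KB L) (A : Arg L) : Prop := A.premises ⊆ K.Kn

/-- `φ` is a contrary of `ψ`. -/
def contrary (AS : ArgSystem L) (φ ψ : L) : Prop := φ ∈ AS.contr ψ ∧ ψ ∉ AS.contr φ
/-- `φ` and `ψ` are contradictories of each other. -/
def contrad (AS : ArgSystem L) (φ ψ : L) : Prop := φ ∈ AS.contr ψ ∧ ψ ∈ AS.contr φ

/-- Strict derivability: `SDer AS S φ` iff there is a strict argument for `φ` all of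
whose premises lie in `S` (`S ⊢ φ`). -/
inductive SDer (AS : ArgSystem L) (S : Set L) : L → Prop where
  | prem {φ : L} : φ ∈ S → SDer AS S φ
  | rule {r : InfRule L} : r ∈ AS.Rs → (∀ ψ ∈ r.ants, SDer AS S ψ) → SDer AS S r.cons

/-- `S` is c-consistent: for no pair of contradictories are both strictly derivable. -/
def CCons (AS : ArgSystem L) (S : Set L) : Prop :=
  ∀ φ ψ : L, contrad AS φ ψ → ¬ (SDer AS S φ ∧ SDer AS S ψ)

/-- `S` is minimally c-inconsistent. -/
def MinCIncons (AS : ArgSystem L) (S : Set L) : Prop :=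
  ¬ CCons AS S ∧ ∀ S' ⊂ S, CCons AS S'

/-- Closure under strict rules. -/
inductive ClRs (AS : ArgSystem L) (S : Set L) : L → Prop where
  | base {φ : L} : φ ∈ S → ClRs AS S φ
  | step {r : InfRule L} : r ∈ AS.Rs → (∀ ψ ∈ r.ants, ClRs AS S ψ) → ClRs AS S r.cons

/-- Direct consistency of a set of formulas. -/
def Consistent (AS : ArgSystem L) (S : Set L) : Prop :=
  ¬ ∃ φ ψ : L, φ ∈ S ∧ ψ ∈ S ∧ ψ ∈ AS.contr φ

/-- The argumentation theory is closed under contraposition. -/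
def ContraClosed (AS : ArgSystem L) : Prop :=
  ∀ (S : Set L) (s : L), s ∈ S → ∀ φ : L, SDer AS S φ →
    ∀ nφ : L, contrad AS φ nφ →
      ∃ ns : L, contrad AS s ns ∧ SDer AS ((S \ {s}) ∪ {nφ}) ns

/-- The argumentation theory is closed under transposition. -/
def TransClosed (AS : ArgSystem L) : Prop :=
  ∀ r ∈ AS.Rs, ∀ i : Fin r.ants.length, ∀ nψ : L, contrad AS r.cons nψ →
    ∃ nφ : L, contrad AS (r.ants.get i) nφ ∧
      ({ ants := r.ants.set i.1 nψ, cons := nφ } : InfRule L) ∈ AS.Rs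

/-- Axiom consistency: the strict closure of the axioms is consistent. -/
def AxiomConsistent (AS : ArgSystem L) (K : KB L) : Prop :=
  Consistent AS {φ | ClRs AS K.Kn φ}

/-- c-classicality. -/
def CClassical (AS : ArgSystem L) : Prop :=
  ∀ S : Set L, MinCIncons AS S → ∀ φ ∈ S,
    ∃ nφ : L, contrad AS φ nφ ∧ SDer AS (S \ {φ}) nφ

/-- Well-formedness: contraried formulas are neither axioms nor consequents of strict rules. -/
def WellFormed (AS : ArgSystem L) (K : KB L) : Prop :=
  ∀ φ ψ : L, contrary AS φ ψ → ψ ∉ K.Kn ∧ ∀ r ∈ AS.Rs, r.cons ≠ ψ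

/-- Well-definedness for SAFs. -/
def WellDefinedSAF (AS : ArgSystem L) (K : KB L) : Prop :=
  AxiomConsistent AS K ∧ WellFormed AS K ∧ (ContraClosed AS ∨ TransClosed AS)

/-- Well-definedness for c-SAFs. -/
def WellDefinedCSAF (AS : ArgSystem L) (K : KB L) : Prop :=
  WellDefinedSAF AS K ∧ CClassical AS

/-- The arguments of the SAF defined by `(AS,K)`: all (finite) arguments. -/
def ArgsSAF (AS : ArgSystem L) (K : KB L) : Set (Arg L) := {A | IsArg AS K A}

/-- The arguments of the c-SAF defined by `(AS,K)`: all (finite) c-consistent arguments. -/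
def ArgsCSAF (AS : ArgSystem L) (K : KB L) : Set (Arg L) :=
  {A | IsArg AS K A ∧ CCons AS A.premises}

/-- `A` undercuts `B` on `B'`. -/
def undercutsOn (AS : ArgSystem L) (A B B' : Arg L) : Prop :=
  B' ∈ B.subs ∧ ∃ r ∈ AS.Rd, B'.topRule = some r ∧ A.conc ∈ AS.contr (AS.nm r)

/-- `A` rebuts `B` on `B'`. -/
def rebutsOn (AS : ArgSystem L) (A B B' : Arg L) : Prop :=
  B' ∈ B.subs ∧ ∃ r ∈ AS.Rd, B'.topRule = some r ∧ A.conc ∈ AS.contr B'.conc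

/-- `A` undermines `B` on `B'`. -/
def underminesOn (AS : ArgSystem L) (K : KB L) (A B B' : Arg L) : Prop :=
  B' ∈ B.subs ∧ ∃ φ ∈ K.Kp, B' = Arg.prem φ ∧ A.conc ∈ AS.contr φ

/-- `A` attacks `B` on `B'`. -/
def attacksOn (AS : ArgSystem L) (K : KB L) (A B B' : Arg L) : Prop :=
  undercutsOn AS A B B' ∨ rebutsOn AS A B B' ∨ underminesOn AS K A B B'

/-- `A` attacks `B`. -/
def attacks (AS : ArgSystem L) (K : KB L) (A B : Arg L) : Prop :=
  ∃ B', attacksOn AS K A B B'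

/-- Preference-independent attacks: undercuts, contrary-rebuts and contrary-undermines. -/
def prefIndepOn (AS : ArgSystem L) (K : KB L) (A B B' : Arg L) : Prop :=
  undercutsOn AS A B B' ∨
  (rebutsOn AS A B B' ∧ contrary AS A.conc B'.conc) ∨
  (underminesOn AS K A B B' ∧ contrary AS A.conc B'.conc)

/-- Preference-dependent attacks. -/
def prefDepOn (AS : ArgSystem L) (K : KB L) (A B B' : Arg L) : Prop :=
  attacksOn AS K A B B' ∧ ¬ prefIndepOn AS K A B B'

/-- The strict counterpart `≺` of an ordering `⪯`. -/
def sprec (pre : Arg L → Arg L → Prop) (X Y : Arg L) : Prop := pre X Y ∧ ¬ pre Y X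

/-- `A` defeats `B`, relative to a strict preference relation `slt` (`≺`). -/
def defeats (AS : ArgSystem L) (K : KB L) (slt : Arg L → Arg L → Prop) (A B : Arg L) : Prop :=
  ∃ B', prefIndepOn AS K A B B' ∨ (prefDepOn AS K A B B' ∧ ¬ slt A B')

/-- `A` is a strict continuation of the set of arguments `Γ`. -/
def StrictCont (AS : ArgSystem L) (K : KB L) (A : Arg L) (Γ : Set (Arg L)) : Prop :=
  premP K A = (⋃ B ∈ Γ, premP K B) ∧
  defRules AS A = (⋃ B ∈ Γ, defRules AS B) ∧
  (⋃ B ∈ Γ, stRules AS B) ⊆ stRules AS A ∧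
  (⋃ B ∈ Γ, premN K B) ⊆ premN K A

/-- `B'` has a fallible top: a defeasible top rule, or an ordinary premise. -/
def fallibleTop (AS : ArgSystem L) (K : KB L) (B' : Arg L) : Prop :=
  (∃ r ∈ AS.Rd, B'.topRule = some r) ∨ (∃ φ ∈ K.Kp, B' = Arg.prem φ)

/-- `M(B)`: the maximal fallible sub-arguments of `B`. -/
def MSet (AS : ArgSystem L) (K : KB L) (B : Arg L) : Set (Arg L) :=
  {B' | B' ∈ B.subs ∧ fallibleTop AS K B' ∧
    ¬ ∃ B'', B'' ∈ B.subs ∧ B'' ≠ B ∧ B'' ≠ B' ∧ fallibleTop AS K B'' ∧ B' ∈ B''.subs}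

/-- A reasonable argument ordering. -/
def Reasonable (AS : ArgSystem L) (K : KB L) (pre : Arg L → Arg L → Prop) : Prop :=
  (∀ A B : Arg L, strictArg AS A → firmArg K A →
      (¬ firmArg K B ∨ ¬ strictArg AS B) → sprec pre B A) ∧
  (∀ A B : Arg L, strictArg AS B → firmArg K B → ¬ sprec pre B A) ∧
  (∀ A A' B : Arg L, StrictCont AS K A' {A} →
      (¬ sprec pre A B → ¬ sprec pre A' B) ∧ (¬ sprec pre B A → ¬ sprec pre B A')) ∧
  (∀ s : Finset (Arg L), s.Nonempty → ∀ f : Arg L → Arg L,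
      (∀ C ∈ s, StrictCont AS K (f C) ((↑s : Set (Arg L)) \ {C})) →
      ¬ (∀ C ∈ s, sprec pre (f C) C))

/-- Conflict-freeness of `S` with respect to a relation (attack or defeat). -/
def CFwrt (rel : Arg L → Arg L → Prop) (S : Set (Arg L)) : Prop :=
  ∀ X ∈ S, ∀ Y ∈ S, ¬ rel X Y

/-- `A` is acceptable with respect to `S` (all its defeaters in `𝒜` are defeated from `S`). -/
def Acceptable (𝒜 : Set (Arg L)) (df : Arg L → Arg L → Prop)
    (S : Set (Arg L)) (A : Arg L) : Prop :=
  ∀ B ∈ 𝒜, df B A → ∃ C ∈ S, df C B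

/-- Admissible sets, relative to a conflict-freeness notion `cf` and defeat relation `df`. -/
def Admissible (𝒜 : Set (Arg L)) (cf : Set (Arg L) → Prop)
    (df : Arg L → Arg L → Prop) (S : Set (Arg L)) : Prop :=
  S ⊆ 𝒜 ∧ cf S ∧ ∀ A ∈ S, Acceptable 𝒜 df S A

/-- Complete extensions. -/
def Complete (𝒜 : Set (Arg L)) (cf : Set (Arg L) → Prop)
    (df : Arg L → Arg L → Prop) (S : Set (Arg L)) : Prop :=
  Admissible 𝒜 cf df S ∧ ∀ A ∈ 𝒜, Acceptable 𝒜 df S A → A ∈ S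

/-- Preferred extensions: ⊆-maximal complete extensions. -/
def Preferred (𝒜 : Set (Arg L)) (cf : Set (Arg L) → Prop)
    (df : Arg L → Arg L → Prop) (S : Set (Arg L)) : Prop :=
  Complete 𝒜 cf df S ∧ ∀ S', Complete 𝒜 cf df S' → S ⊆ S' → S' = S

/-- The grounded extension: the ⊆-minimal complete extension. -/
def Grounded (𝒜 : Set (Arg L)) (cf : Set (Arg L) → Prop)
    (df : Arg L → Arg L → Prop) (S : Set (Arg L)) : Prop :=
  Complete 𝒜 cf df S ∧ ∀ S', Complete 𝒜 cf df S' → S ⊆ S'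

/-- Stable extensions. -/
def Stable (𝒜 : Set (Arg L)) (cf : Set (Arg L) → Prop)
    (df : Arg L → Arg L → Prop) (S : Set (Arg L)) : Prop :=
  Preferred 𝒜 cf df S ∧ ∀ B ∈ 𝒜, B ∉ S → ∃ A ∈ S, df A B

/-- The set of antecedents of a rule. -/
def antsSet {L : Type} (r : InfRule L) : Set L := {φ | φ ∈ r.ants}

end ASPIC
namespace ASPIC

variable {L : Type}

theorem sder_mono {AS : ArgSystem L} {S T : Set L} (h : S ⊆ T) {φ : L}
    (hd : SDer AS S φ) : SDer AS T φ := by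
  induction hd with
  | prem hφ => exact .prem (h hφ)
  | rule hr _ ih => exact .rule hr ih

theorem ccons_anti {AS : ArgSystem L} {S T : Set L} (h : S ⊆ T) (hT : CCons AS T) :
    CCons AS S := fun φ ψ hc ⟨h1, h2⟩ => hT φ ψ hc ⟨sder_mono h h1, sder_mono h h2⟩

mutual
theorem premises_finite (A : Arg L) : A.premises.Finite := by
  cases A with
  | prem φ => rw [Arg.premises]; exact Set.finite_singleton φ
  | app l r => rw [Arg.premises]; exact premisesL_finite l
theorem premisesL_finite (l : List (Arg L)) : (Arg.premisesL l).Finite := by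
  cases l with
  | nil => rw [Arg.premisesL]; exact Set.finite_empty
  | cons a as => rw [Arg.premisesL]; exact (premises_finite a).union (premisesL_finite as)
end

theorem mem_premisesL {l : List (Arg L)} {x : L} :
    x ∈ Arg.premisesL l ↔ ∃ a ∈ l, x ∈ a.premises := by
  induction l with
  | nil => rw [Arg.premisesL]; simp
  | cons a as ih => rw [Arg.premisesL]; simp [ih, Set.mem_union]


theorem mem_subsL {l : List (Arg L)} {x : Arg L} :
    x ∈ Arg.subsL l ↔ ∃ a ∈ l, x ∈ a.subs := by
  induction l with
  | nil => rw [Arg.subsL]; simp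
  | cons a as ih => rw [Arg.subsL]; simp [ih, Set.mem_union]

theorem mem_rulesL {l : List (Arg L)} {x : InfRule L} :
    x ∈ Arg.rulesL l ↔ ∃ a ∈ l, x ∈ a.rules := by
  induction l with
  | nil => rw [Arg.rulesL]; simp
  | cons a as ih => rw [Arg.rulesL]; simp [ih, Set.mem_union]

theorem mem_premisesL' {l : List (Arg L)} {x : L} :
    x ∈ Arg.premisesL l ↔ ∃ a ∈ l, x ∈ a.premises := by
  induction l with
  | nil => rw [Arg.premisesL]; simp
  | cons a as ih => rw [Arg.premisesL]; simp [ih, Set.mem_union]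

theorem prem_mem_subs_iff {A : Arg L} {φ : L} :
    Arg.prem φ ∈ A.subs ↔ φ ∈ A.premises := by
  induction A using Arg.rec (motive_2 := fun l => Arg.prem φ ∈ Arg.subsL l ↔ φ ∈ Arg.premisesL l) with
  | prem ψ => rw [Arg.subs, Arg.premises]; simp
  | app l r ih => rw [Arg.subs, Arg.premises]; simp only [Set.mem_union, ih]; simp
  | nil => rw [Arg.subsL, Arg.premisesL]; simp
  | cons a as iha ihas => rw [Arg.subsL, Arg.premisesL]; simp [iha, ihas, Set.mem_union]


theorem topRule_of_sub {A B' : Arg L} {r : InfRule L}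
    (h : B' ∈ A.subs) (ht : B'.topRule = some r) : r ∈ A.rules := by
  induction A using Arg.rec
    (motive_2 := fun l => B' ∈ Arg.subsL l → r ∈ Arg.rulesL l) with
  | prem ψ =>
      rw [Arg.subs] at h; simp at h; subst h; rw [Arg.topRule] at ht; cases ht
  | app l r' ih =>
      rw [Arg.subs] at h; rw [Arg.rules]
      rcases h with h | h
      · exact Set.mem_union_left _ (ih h)
      · simp at h; subst h; rw [Arg.topRule] at ht
        cases ht; exact Set.mem_union_right _ rfl
  | nil => rename_i h; rw [Arg.subsL] at h; cases h
  | cons a as iha ihas =>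
      rename_i h; rw [Arg.subsL] at h; rw [Arg.rulesL]
      rcases h with h | h
      · exact Set.mem_union_left _ (iha h)
      · exact Set.mem_union_right _ (ihas h)

theorem isArg_premises {AS : ArgSystem L} {K : KB L} {A : Arg L}
    (h : IsArg AS K A) : A.premises ⊆ K.Kn ∪ K.Kp := by
  induction h with
  | prem hφ => rw [Arg.premises]; intro x hx; simp at hx; subst hx; exact hφ
  | app _ _ _ ih =>
      rw [Arg.premises]; intro x hx
      rcases mem_premisesL'.1 hx with ⟨a, ha, hxa⟩
      exact ih a ha hxa

theorem sder_of_arg {AS : ArgSystem L} {K : KB L} {A : Arg L}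
    (h : IsArg AS K A) (hr : A.rules ⊆ AS.Rs) : SDer AS A.premises A.conc := by
  induction h with
  | prem hφ => rw [Arg.premises, Arg.conc]; exact .prem rfl
  | @app l r hl hrm hmap ih =>
      rw [Arg.rules] at hr
      have hrs : r ∈ AS.Rs := hr (Set.mem_union_right _ rfl)
      rw [Arg.conc, Arg.premises]
      refine .rule hrs ?_
      intro ψ hψ
      rw [← hmap] at hψ
      rcases List.mem_map.1 hψ with ⟨a, ha, rfl⟩
      have : a.rules ⊆ AS.Rs := fun x hx =>
        hr (Set.mem_union_left _ (mem_rulesL.2 ⟨a, ha, hx⟩))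
      refine sder_mono ?_ (ih a ha this)
      intro x hx; exact mem_premisesL'.2 ⟨a, ha, hx⟩

theorem exists_arg_of_sder {AS : ArgSystem L} {K : KB L} {T : Set L} {φ : L}
    (hd : SDer AS T φ) (hT : T ⊆ K.Kn ∪ K.Kp) :
    ∃ X : Arg L, IsArg AS K X ∧ X.conc = φ ∧ X.premises ⊆ T ∧ X.rules ⊆ AS.Rs := by
  induction hd with
  | @prem φ hφ =>
      exact ⟨.prem φ, .prem (hT hφ), by rw [Arg.conc],
        by rw [Arg.premises]; simpa using hφ, by rw [Arg.rules]; simp⟩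
  | @rule r hr hants ih =>
      have : ∀ ants : List L, (∀ ψ ∈ ants, ∃ X : Arg L, IsArg AS K X ∧ X.conc = ψ ∧
          X.premises ⊆ T ∧ X.rules ⊆ AS.Rs) →
          ∃ l : List (Arg L), l.map Arg.conc = ants ∧ (∀ a ∈ l, IsArg AS K a) ∧
            Arg.premisesL l ⊆ T ∧ Arg.rulesL l ⊆ AS.Rs := by
        intro ants
        induction ants with
        | nil => intro _; exact ⟨[], rfl, by simp, by rw [Arg.premisesL]; simp,
            by rw [Arg.rulesL]; simp⟩
        | cons ψ rest ihl =>
            intro hh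
            obtain ⟨X, hX1, hX2, hX3, hX4⟩ := hh ψ (by simp)
            obtain ⟨l, hl1, hl2, hl3, hl4⟩ := ihl (fun χ hχ => hh χ (by simp [hχ]))
            refine ⟨X :: l, by simp [hl1, hX2], ?_, ?_, ?_⟩
            · intro a ha; rcases List.mem_cons.1 ha with rfl | ha
              · exact hX1
              · exact hl2 a ha
            · rw [Arg.premisesL]; exact Set.union_subset hX3 hl3
            · rw [Arg.rulesL]; exact Set.union_subset hX4 hl4
      obtain ⟨l, hl1, hl2, hl3, hl4⟩ := this r.ants ih
      refine ⟨.app l r, .app hl2 (Set.mem_union_left _ hr) hl1, by rw [Arg.conc],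
        by rw [Arg.premises]; exact hl3, ?_⟩
      rw [Arg.rules]
      exact Set.union_subset hl4 (by simpa using hr)

theorem clrs_of_sder {AS : ArgSystem L} {S T : Set L} {φ : L}
    (hd : SDer AS S φ) (h : S ⊆ T) : ClRs AS T φ := by
  induction hd with
  | prem hφ => exact .base (h hφ)
  | rule hr _ ih => exact .step hr ih

theorem ccons_of_subset_Kn {AS : ArgSystem L} {K : KB L}
    (hax : AxiomConsistent AS K) {S : Set L} (h : S ⊆ K.Kn) : CCons AS S := by
  intro φ ψ hc ⟨h1, h2⟩
  exact hax ⟨φ, ψ, clrs_of_sder h1 h, clrs_of_sder h2 h, hc.2⟩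

theorem exists_minCIncons (AS : ArgSystem L) {T : Set L} (hT : T.Finite)
    (h : ¬ CCons AS T) : ∃ S ⊆ T, MinCIncons AS S := by
  classical
  have key : ∀ t : Finset L, ¬ CCons AS ↑t → ∃ S ⊆ (↑t : Set L), MinCIncons AS S := by
    intro t
    induction t using Finset.strongInduction with
    | _ t ih =>
      intro hnc
      by_cases hall : ∀ S' ⊂ (↑t : Set L), CCons AS S'
      · exact ⟨↑t, le_refl _, hnc, hall⟩
      · push_neg at hall
        obtain ⟨S', hS'sub, hS'nc⟩ := hall
        have hfin : S'.Finite := (t.finite_toSet.subset hS'sub.subset)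
        have hlt : hfin.toFinset ⊂ t := by
          rw [← Finset.coe_ssubset, hfin.coe_toFinset]; exact hS'sub
        obtain ⟨S, hS1, hS2⟩ := ih hfin.toFinset hlt (by rwa [hfin.coe_toFinset])
        exact ⟨S, hS1.trans (by rw [hfin.coe_toFinset]; exact hS'sub.subset), hS2⟩
  obtain ⟨S, h1, h2⟩ := key hT.toFinset (by rwa [hT.coe_toFinset])
  exact ⟨S, by rwa [hT.coe_toFinset] at h1, h2⟩


/-- Extract the formula of a premise-argument (arbitrary on applications). -/
def unprem : Arg L → L
  | .prem φ => φ
  | .app _ r => r.cons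

theorem pack_arg {AS : ArgSystem L} {K : KB L} (hcc : CClassical AS) {S : Set L}
    (hmin : MinCIncons AS S) (hSsub : S ⊆ K.Kn ∪ K.Kp) {φ : L} (hφ : φ ∈ S) :
    ∃ X : Arg L, ∃ nφ : L, IsArg AS K X ∧ X.conc = nφ ∧ contrad AS φ nφ ∧
      X.premises = S \ {φ} ∧ X.rules ⊆ AS.Rs := by
  obtain ⟨nφ, hcon, hder⟩ := hcc S hmin φ hφ
  obtain ⟨X, hX1, hX2, hX3, hX4⟩ :=
    exists_arg_of_sder hder (fun x hx => hSsub hx.1)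
  refine ⟨X, nφ, hX1, hX2, hcon, ?_, hX4⟩
  have hd : SDer AS (X.premises ∪ {φ}) nφ := by
    have := sder_of_arg hX1 hX4
    rw [hX2] at this
    exact sder_mono Set.subset_union_left this
  have hd2 : SDer AS (X.premises ∪ {φ}) φ := .prem (by simp)
  have hnc : ¬ CCons AS (X.premises ∪ {φ}) := fun hc => hc φ nφ hcon ⟨hd2, hd⟩
  have hsub : X.premises ∪ {φ} ⊆ S :=
    Set.union_subset (hX3.trans Set.diff_subset) (by simpa using hφ)
  have heq : X.premises ∪ {φ} = S := by
    by_contra hne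
    exact hnc (hmin.2 _ ⟨hsub, fun h => hne (le_antisymm hsub h)⟩)
  apply Set.Subset.antisymm hX3
  intro x hx
  have : x ∈ X.premises ∪ {φ} := heq ▸ hx.1
  rcases this with h | h
  · exact h
  · exact absurd h hx.2

theorem strictCont_of_pack {AS : ArgSystem L} {K : KB L} {S : Set L} {φ : L} {X : Arg L}
    (hprem : X.premises = S \ {φ}) (hrules : X.rules ⊆ AS.Rs)
    (hSsub : S ⊆ K.Kn ∪ K.Kp) (hφ : φ ∈ S \ K.Kn) :
    StrictCont AS K X (Arg.prem '' ((S \ K.Kn) \ {φ})) := by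
  have hinj : Function.Injective (Arg.prem : L → Arg L) := fun a b h => by cases h; rfl
  have hKdisj := K.hdisj
  have hRdisj := AS.hdisj
  have hpremP : ∀ ψ : L, premP K (Arg.prem ψ) = {ψ} ∩ K.Kp := by
    intro ψ; rw [premP, Arg.premises]
  have hpremN : ∀ ψ : L, premN K (Arg.prem ψ) = {ψ} ∩ K.Kn := by
    intro ψ; rw [premN, Arg.premises]
  have hrul : ∀ ψ : L, (Arg.prem ψ).rules = ∅ := fun ψ => by rw [Arg.rules]
  refine ⟨?_, ?_, ?_, ?_⟩
  · -- ordinary premises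
    ext x
    simp only [premP, hprem, Set.mem_iUnion, Set.mem_image, Set.mem_inter_iff,
      Set.mem_diff, Set.mem_singleton_iff]
    constructor
    · rintro ⟨⟨hxS, hxφ⟩, hxKp⟩
      refine ⟨Arg.prem x, ⟨x, ⟨⟨hxS, ?_⟩, hxφ⟩, rfl⟩, ?_⟩
      · intro hxKn; exact (Set.eq_empty_iff_forall_notMem.1 hKdisj x) ⟨hxKn, hxKp⟩
      · rw [Arg.premises]; exact ⟨rfl, hxKp⟩
    · rintro ⟨B, ⟨ψ, ⟨⟨hψS, hψKn⟩, hψφ⟩, rfl⟩, hx⟩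
      rw [Arg.premises] at hx
      rcases hx with ⟨hx1, hx2⟩
      simp at hx1; subst hx1
      exact ⟨⟨hψS, hψφ⟩, hx2⟩
  · -- defeasible rules
    have h1 : defRules AS X = ∅ := by
      rw [defRules]
      apply Set.eq_empty_iff_forall_notMem.2
      intro r hr
      exact (Set.eq_empty_iff_forall_notMem.1 hRdisj r) ⟨hrules hr.1, hr.2⟩
    rw [h1]
    apply Eq.symm
    apply Set.eq_empty_iff_forall_notMem.2
    intro r hr
    simp only [Set.mem_iUnion] at hr
    obtain ⟨B, ⟨ψ, _, rfl⟩, hrB⟩ := hr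
    rw [defRules, hrul] at hrB
    exact hrB.1
  · intro r hr
    simp only [Set.mem_iUnion] at hr
    obtain ⟨B, ⟨ψ, _, rfl⟩, hrB⟩ := hr
    rw [stRules, hrul] at hrB
    exact absurd hrB.1 (Set.notMem_empty r)
  · intro x hx
    simp only [Set.mem_iUnion] at hx
    obtain ⟨B, ⟨ψ, hψ, rfl⟩, hxB⟩ := hx
    rw [hpremN] at hxB
    rcases hxB with ⟨hx1, hx2⟩
    simp at hx1; subst hx1
    -- ψ ∈ S \ Kn but also ∈ Kn: contradiction
    exact absurd hx2 hψ.1.2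


theorem defeats_attacks {AS : ArgSystem L} {K : KB L} {slt : Arg L → Arg L → Prop}
    {A B : Arg L} (h : defeats AS K slt A B) : attacks AS K A B := by
  obtain ⟨B', h⟩ := h
  rcases h with h | ⟨⟨h, _⟩, _⟩
  · rcases h with h | ⟨h, _⟩ | ⟨h, _⟩
    · exact ⟨B', Or.inl h⟩
    · exact ⟨B', Or.inr (Or.inl h)⟩
    · exact ⟨B', Or.inr (Or.inr h)⟩
  · exact ⟨B', h⟩


/-- Proposition 2: in a well-defined c-SAF with a reasonable ordering, if
`A1, …, An ∈ 𝒜` are all acceptable w.r.t. an attack conflict-free `E ⊆ 𝒜`, then the union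
of their premises is c-consistent. -/
theorem statement1 {L : Type} (AS : ArgSystem L) (K : KB L) (pre : Arg L → Arg L → Prop)
    (hwd : WellDefinedCSAF AS K) (hreas : Reasonable AS K pre)
    (E : Set (Arg L)) (hEsub : E ⊆ ArgsCSAF AS K)
    (hEcf : CFwrt (attacks AS K) E)
    (n : ℕ) (f : Fin n → Arg L) (hf : ∀ i, f i ∈ ArgsCSAF AS K)
    (hacc : ∀ i, Acceptable (ArgsCSAF AS K) (defeats AS K (sprec pre)) E (f i)) :
    CCons AS (⋃ i, (f i).premises) := by
  classical
  by_contra hU0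
  obtain ⟨⟨hax, hwf, _⟩, hccl⟩ := hwd
  have hUfin : (⋃ i, (f i).premises).Finite :=
    Set.finite_iUnion (fun i => premises_finite (f i))
  obtain ⟨S, hSU, hSmin⟩ := exists_minCIncons AS hUfin hU0
  have hSsub : S ⊆ K.Kn ∪ K.Kp := by
    intro x hx
    rcases Set.mem_iUnion.1 (hSU hx) with ⟨i, hi⟩
    exact isArg_premises (hf i).1 hi
  have hSfin := hUfin.subset hSU
  set Sp := S \ K.Kn with hSpdef
  have hSpKp : Sp ⊆ K.Kp := by
    intro x hx
    rcases hSsub hx.1 with h | h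
    · exact absurd h hx.2
    · exact h
  have hSpne : Sp.Nonempty := by
    rw [Set.nonempty_iff_ne_empty]
    intro h
    have hkn : S ⊆ K.Kn := by
      intro x hx
      by_contra hk
      exact Set.eq_empty_iff_forall_notMem.1 h x ⟨hx, hk⟩
    exact hSmin.1 (ccons_of_subset_Kn hax hkn)
  have hpk : ∀ φ : L, ∃ X : Arg L, ∃ nφ : L, φ ∈ S →
      IsArg AS K X ∧ X.conc = nφ ∧ contrad AS φ nφ ∧ X.premises = S \ {φ} ∧
        X.rules ⊆ AS.Rs := by
    intro φ
    by_cases hφ : φ ∈ S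
    · obtain ⟨X, nφ, h1, h2, h3, h4, h5⟩ := pack_arg hccl hSmin hSsub hφ
      exact ⟨X, nφ, fun _ => ⟨h1, h2, h3, h4, h5⟩⟩
    · exact ⟨.prem hSpne.choose, hSpne.choose, fun h => absurd h hφ⟩
  choose Xf nf hXf using hpk
  have hinj : Function.Injective (Arg.prem : L → Arg L) := fun a b h => by cases h; rfl
  by_cases hall : ∀ φ ∈ Sp, sprec pre (Xf φ) (.prem φ)
  · -- Case 1: contradict reasonableness condition (2)
    have hSpfin : Sp.Finite := hSfin.subset Set.diff_subset
    set s : Finset (Arg L) := hSpfin.toFinset.image Arg.prem with hsdef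
    have hscoe : (↑s : Set (Arg L)) = Arg.prem '' Sp := by
      rw [hsdef, Finset.coe_image, hSpfin.coe_toFinset]
    have hsne : s.Nonempty := by
      obtain ⟨ψ, hψ⟩ := hSpne
      exact ⟨.prem ψ, by rw [hsdef]; exact Finset.mem_image_of_mem _ (hSpfin.mem_toFinset.2 hψ)⟩
    have hSC : ∀ C ∈ s, StrictCont AS K ((fun C => Xf (unprem C)) C)
        ((↑s : Set (Arg L)) \ {C}) := by
      intro C hC
      rw [hsdef, Finset.mem_image] at hC
      obtain ⟨ψ, hψ, rfl⟩ := hC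
      have hψSp : ψ ∈ Sp := hSpfin.mem_toFinset.1 hψ
      obtain ⟨_, _, _, h4, h5⟩ := hXf ψ hψSp.1
      have him : (↑s : Set (Arg L)) \ {Arg.prem ψ} = Arg.prem '' (Sp \ {ψ}) := by
        rw [hscoe, ← Set.image_singleton (f := Arg.prem), ← Set.image_diff hinj]
      rw [him]
      show StrictCont AS K (Xf ψ) _
      exact strictCont_of_pack h4 h5 hSsub hψSp
    refine hreas.2.2.2 s hsne _ hSC ?_
    intro C hC
    rw [hsdef, Finset.mem_image] at hC
    obtain ⟨ψ, hψ, rfl⟩ := hC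
    exact hall ψ (hSpfin.mem_toFinset.1 hψ)
  · -- Case 2
    push_neg at hall
    obtain ⟨φ0, hφ0Sp, hnsl⟩ := hall
    obtain ⟨hIs0, hconc0, hcontrad0, hprem0, hrules0⟩ := hXf φ0 hφ0Sp.1
    have hX0mem : Xf φ0 ∈ ArgsCSAF AS K := by
      refine ⟨hIs0, ?_⟩
      rw [hprem0]
      exact hSmin.2 _ ⟨Set.diff_subset, fun h => (h hφ0Sp.1).2 rfl⟩
    obtain ⟨j0, hj0⟩ := Set.mem_iUnion.1 (hSU hφ0Sp.1)
    have hund0 : underminesOn AS K (Xf φ0) (f j0) (.prem φ0) :=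
      ⟨prem_mem_subs_iff.2 hj0, φ0, hSpKp hφ0Sp, rfl, by rw [hconc0]; exact hcontrad0.2⟩
    have hnotpi0 : ¬ prefIndepOn AS K (Xf φ0) (f j0) (.prem φ0) := by
      rintro (⟨_, r, hrd, htr, _⟩ | ⟨⟨_, r, hrd, htr, _⟩, _⟩ | ⟨_, hcont⟩)
      · rw [Arg.topRule] at htr; cases htr
      · rw [Arg.topRule] at htr; cases htr
      · have : φ0 ∉ AS.contr (Xf φ0).conc := hcont.2
        rw [hconc0] at this
        exact this hcontrad0.1
    have hdef0 : defeats AS K (sprec pre) (Xf φ0) (f j0) :=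
      ⟨.prem φ0, Or.inr ⟨⟨Or.inr (Or.inr hund0), hnotpi0⟩, hnsl⟩⟩
    obtain ⟨C, hCE, hCdef⟩ := hacc j0 (Xf φ0) hX0mem hdef0
    -- analyze C's defeat of X0: must be an undermine on some premise ψ
    have hnorule : ∀ B' : Arg L, B' ∈ (Xf φ0).subs → ∀ r ∈ AS.Rd,
        B'.topRule ≠ some r := by
      intro B' hB' r hrd htr
      have := hrules0 (topRule_of_sub hB' htr)
      exact Set.eq_empty_iff_forall_notMem.1 AS.hdisj r ⟨this, hrd⟩
    obtain ⟨B', hB'⟩ := hCdef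
    have hexψ : ∃ ψ : L, ψ ∈ (Xf φ0).premises ∧ ψ ∈ K.Kp ∧ C.conc ∈ AS.contr ψ ∧
        (contrary AS C.conc ψ ∨
          (¬ contrary AS C.conc ψ ∧ ¬ sprec pre C (.prem ψ))) := by
      rcases hB' with hpi | ⟨⟨hatk, hnpi⟩, hns⟩
      · rcases hpi with ⟨hsub, r, hrd, htr, _⟩ | ⟨⟨hsub, r, hrd, htr, _⟩, _⟩ |
            ⟨⟨hsub, ψ, hψKp, rfl, hconc⟩, hcont⟩
        · exact absurd htr (hnorule _ hsub r hrd)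
        · exact absurd htr (hnorule _ hsub r hrd)
        · exact ⟨ψ, prem_mem_subs_iff.1 hsub, hψKp, hconc, Or.inl hcont⟩
      · rcases hatk with ⟨hsub, r, hrd, htr, _⟩ | ⟨hsub, r, hrd, htr, _⟩ |
            ⟨hsub, ψ, hψKp, rfl, hconc⟩
        · exact absurd htr (hnorule _ hsub r hrd)
        · exact absurd htr (hnorule _ hsub r hrd)
        · refine ⟨ψ, prem_mem_subs_iff.1 hsub, hψKp, hconc, Or.inr ⟨?_, hns⟩⟩
          intro hcont
          exact hnpi (Or.inr (Or.inr ⟨⟨hsub, ψ, hψKp, rfl, hconc⟩, hcont⟩))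
    obtain ⟨ψ, hψprem, hψKp, hψconc, hψlast⟩ := hexψ
    have hψS : ψ ∈ S := (hprem0 ▸ hψprem : ψ ∈ S \ {φ0}).1
    obtain ⟨j1, hj1⟩ := Set.mem_iUnion.1 (hSU hψS)
    have hund1 : underminesOn AS K C (f j1) (.prem ψ) :=
      ⟨prem_mem_subs_iff.2 hj1, ψ, hψKp, rfl, hψconc⟩
    have hdef1 : defeats AS K (sprec pre) C (f j1) := by
      rcases hψlast with hcont | ⟨hncont, hns⟩
      · exact ⟨.prem ψ, Or.inl (Or.inr (Or.inr ⟨hund1, hcont⟩))⟩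
      · refine ⟨.prem ψ, Or.inr ⟨⟨Or.inr (Or.inr hund1), ?_⟩, hns⟩⟩
        rintro (⟨_, r, hrd, htr, _⟩ | ⟨⟨_, r, hrd, htr, _⟩, _⟩ | ⟨_, hcont⟩)
        · rw [Arg.topRule] at htr; cases htr
        · rw [Arg.topRule] at htr; cases htr
        · exact hncont hcont
    obtain ⟨D, hDE, hDdef⟩ := hacc j1 C (hEsub hCE) hdef1
    exact hEcf D hDE C hCE (defeats_attacks hDdef)


end ASPIC
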